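/- arXiv:2301.03248 — 11 statements merged into one kernel-verified Lean document; each statement's English description precedes it below -/
import Mathlib

section
/- For every domain G ⊊ ℝⁿ, every α > 0, and all points x, y ∈ G, the inequality min{1, 2/√α} · j*_G(x,y) ≤ p^α_G(x,y) holds. -/
/-!
Write `t = |x - y|`, `a = d_G(x)`, `b = d_G(y)` and `m = min a b`. Since `d_G` is 1-Lipschitz,
`|a - b| ≤ t`, hence `a b ≤ m (m + t)` and `(t + 2m)² = t² + 4m(m + t) ≥ t² + 4ab`.
Multiplying `√(t² + α a b)` by `min {1, 2/√α}` brings it below `√(t² + 4ab)`, so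
`min {1, 2/√α} · √(t² + α a b) ≤ t + 2m`, which is the claim after clearing denominators.
-/

open Metric

noncomputable section

namespace PointPair

/-- `j*_G`, with `s` in the role of `∂G`. -/
def jStar {E : Type*} [PseudoMetricSpace E] (s : Set E) (x y : E) : ℝ :=
  dist x y / (dist x y + 2 * min (infDist x s) (infDist y s))

/-- `p^α_G`, with `s` in the role of `∂G`. -/
def pointPair {E : Type*} [PseudoMetricSpace E] (α : ℝ) (s : Set E) (x y : E) : ℝ :=
  dist x y / √(dist x y ^ 2 + α * infDist x s * infDist y s)

lemma mul_le_min_mul_min_add {a b t : ℝ} (ha : 0 ≤ a) (hb : 0 ≤ b)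
    (hab : a ≤ b + t) (hba : b ≤ a + t) : a * b ≤ min a b * (min a b + t) := by
  rcases le_total a b with h | h
  · rw [min_eq_left h]; exact mul_le_mul_of_nonneg_left hba ha
  · rw [min_eq_right h, mul_comm]; exact mul_le_mul_of_nonneg_left hab hb

lemma min_one_two_div_sqrt_mul_sqrt_le {α : ℝ} (hα : 0 < α) (t P : ℝ) (hP : 0 ≤ P) :
    min 1 (2 / √α) * √(t ^ 2 + α * P) ≤ √(t ^ 2 + 4 * P) := by
  rcases le_total α 4 with h4 | h4
  · calc min 1 (2 / √α) * √(t ^ 2 + α * P) ≤ 1 * √(t ^ 2 + α * P) := by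
          gcongr; exact min_le_left _ _
      _ ≤ √(t ^ 2 + 4 * P) := by rw [one_mul]; gcongr
  · have h2 : 2 / √α = √(4 / α) := by
      rw [Real.sqrt_div' _ hα.le, show (4 : ℝ) = 2 ^ 2 by norm_num, Real.sqrt_sq zero_le_two]
    calc min 1 (2 / √α) * √(t ^ 2 + α * P) ≤ √(4 / α) * √(t ^ 2 + α * P) := by
          rw [← h2]; gcongr; exact min_le_right _ _
      _ = √(4 / α * t ^ 2 + 4 * P) := by
          rw [← Real.sqrt_mul (by positivity)]; congr 1; field_simp
      _ ≤ √(t ^ 2 + 4 * P) := by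
          gcongr
          exact mul_le_of_le_one_left (sq_nonneg t) ((div_le_one hα).2 h4)

lemma min_one_two_div_sqrt_mul_sqrt_le_add {α a b t : ℝ} (hα : 0 < α) (ha : 0 ≤ a)
    (hb : 0 ≤ b) (ht : 0 ≤ t) (hab : a ≤ b + t) (hba : b ≤ a + t) :
    min 1 (2 / √α) * √(t ^ 2 + α * a * b) ≤ t + 2 * min a b := by
  have hm : 0 ≤ min a b := le_min ha hb
  calc min 1 (2 / √α) * √(t ^ 2 + α * a * b) ≤ √(t ^ 2 + 4 * (a * b)) := by
        rw [mul_assoc]; exact min_one_two_div_sqrt_mul_sqrt_le hα t _ (mul_nonneg ha hb)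
    _ ≤ √((t + 2 * min a b) ^ 2) := by
        gcongr; nlinarith [mul_le_min_mul_min_add ha hb hab hba]
    _ = t + 2 * min a b := Real.sqrt_sq (by positivity)

theorem min_one_two_div_sqrt_mul_jStar_le_pointPair {E : Type*} [PseudoMetricSpace E]
    {α : ℝ} (hα : 0 < α) (s : Set E) (x y : E) :
    min 1 (2 / √α) * jStar s x y ≤ pointPair α s x y := by
  unfold jStar pointPair
  have ha : 0 ≤ infDist x s := infDist_nonneg
  have hb : 0 ≤ infDist y s := infDist_nonneg
  have hab : infDist x s ≤ infDist y s + dist x y := infDist_le_infDist_add_dist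
  have hba : infDist y s ≤ infDist x s + dist x y := by
    rw [dist_comm]; exact infDist_le_infDist_add_dist
  have key := min_one_two_div_sqrt_mul_sqrt_le_add hα ha hb dist_nonneg hab hba
  rcases (dist_nonneg (x := x) (y := y)).eq_or_lt with h0 | h0
  · simp [← h0]
  have hX : 0 < √(dist x y ^ 2 + α * infDist x s * infDist y s) :=
    Real.sqrt_pos.2 (by positivity)
  rw [mul_div_assoc', div_le_div_iff₀ (by positivity) hX]
  nlinarith [mul_le_mul_of_nonneg_left key h0.le]

end PointPair

end

theorem stmt_0_general (n : ℕ) (G : Set (EuclideanSpace ℝ (Fin n)))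
    (α : ℝ) (hα : 0 < α)
    (x y : EuclideanSpace ℝ (Fin n)) :
    min 1 (2 / Real.sqrt α) *
        (dist x y /
          (dist x y + 2 * min (Metric.infDist x (frontier G)) (Metric.infDist y (frontier G)))) ≤
      dist x y /
        Real.sqrt (dist x y ^ 2 +
          α * Metric.infDist x (frontier G) * Metric.infDist y (frontier G)) :=
  PointPair.min_one_two_div_sqrt_mul_jStar_le_pointPair hα (frontier G) x y

/-- For every domain `G ⊊ ℝⁿ`, every `α > 0`, and all `x, y ∈ G`,
`min {1, 2/√α} · j*_G(x,y) ≤ p^α_G(x,y)`, where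
`p^α_G(x,y) = |x−y| / √(|x−y|² + α·d_G(x)·d_G(y))` and
`j*_G(x,y) = |x−y| / (|x−y| + 2·min{d_G(x), d_G(y)})`. -/
theorem stmt_0 (n : ℕ) (hn : 1 ≤ n) (G : Set (EuclideanSpace ℝ (Fin n)))
    (hGopen : IsOpen G) (hGconn : IsConnected G) (hGproper : G ≠ Set.univ)
    (α : ℝ) (hα : 0 < α)
    (x y : EuclideanSpace ℝ (Fin n)) (hx : x ∈ G) (hy : y ∈ G) :
    min 1 (2 / Real.sqrt α) *
        (dist x y /
          (dist x y + 2 * min (Metric.infDist x (frontier G)) (Metric.infDist y (frontier G)))) ≤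
      dist x y /
        Real.sqrt (dist x y ^ 2 +
          α * Metric.infDist x (frontier G) * Metric.infDist y (frontier G)) :=
  stmt_0_general n G α hα x y
end

section
/- For every domain G ⊊ ℝⁿ, every α > 0, and all points x, y ∈ G, the inequality p^α_G(x,y) ≤ √((α+4)/α) · j*_G(x,y) holds. -/
/-!
With `t = |x - y|` and `m = min{d(x), d(y)}` we have `m² ≤ d(x) d(y)`, so it suffices to show
`(t + 2m)² ≤ (α + 4)/α · (t² + α m²)`. The difference of the two sides is
`(2t/√α - √α m)² ≥ 0`.
-/

lemma add_two_mul_sq_le {α : ℝ} (hα : 0 < α) (t m : ℝ) :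
    (t + 2 * m) ^ 2 ≤ (α + 4) / α * (t ^ 2 + α * m ^ 2) := by
  rw [div_mul_eq_mul_div, le_div_iff₀ hα]
  nlinarith [sq_nonneg (2 * t - α * m)]

lemma add_two_mul_min_le_sqrt {α : ℝ} (hα : 0 < α) (t : ℝ) {a b : ℝ} (ha : 0 ≤ a) (hb : 0 ≤ b) :
    t + 2 * min a b ≤ Real.sqrt ((α + 4) / α * (t ^ 2 + α * a * b)) := by
  have hm : 0 ≤ min a b := le_min ha hb
  have hmm : min a b ^ 2 ≤ a * b := by
    rw [sq]; exact mul_le_mul (min_le_left _ _) (min_le_right _ _) hm ha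
  apply Real.le_sqrt_of_sq_le
  calc (t + 2 * min a b) ^ 2 ≤ (α + 4) / α * (t ^ 2 + α * min a b ^ 2) :=
        add_two_mul_sq_le hα t _
    _ ≤ (α + 4) / α * (t ^ 2 + α * a * b) := by
        rw [mul_assoc α a b]; gcongr

lemma div_sqrt_le_sqrt_mul_div_add_two_mul_min {α : ℝ} (hα : 0 < α) {t a b : ℝ} (ht : 0 ≤ t)
    (ha : 0 ≤ a) (hb : 0 ≤ b) :
    t / Real.sqrt (t ^ 2 + α * a * b) ≤ Real.sqrt ((α + 4) / α) * (t / (t + 2 * min a b)) := by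
  rcases ht.eq_or_lt with rfl | ht
  · simp
  have hB : 0 < t + 2 * min a b := by positivity
  have hA : 0 < Real.sqrt (t ^ 2 + α * a * b) := by positivity
  rw [mul_div_assoc', div_le_div_iff₀ hA hB, mul_comm t, mul_right_comm,
    ← Real.sqrt_mul (by positivity)]
  exact mul_le_mul_of_nonneg_right (add_two_mul_min_le_sqrt hα t ha hb) ht.le

theorem stmt_1_general (n : ℕ) (G : Set (EuclideanSpace ℝ (Fin n)))
    (α : ℝ) (hα : 0 < α)
    (x y : EuclideanSpace ℝ (Fin n)) :
    dist x y /
        Real.sqrt (dist x y ^ 2 +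
          α * Metric.infDist x (frontier G) * Metric.infDist y (frontier G)) ≤
      Real.sqrt ((α + 4) / α) *
        (dist x y /
          (dist x y + 2 * min (Metric.infDist x (frontier G)) (Metric.infDist y (frontier G)))) :=
  div_sqrt_le_sqrt_mul_div_add_two_mul_min hα dist_nonneg Metric.infDist_nonneg
    Metric.infDist_nonneg

/-- For every domain `G ⊊ ℝⁿ`, every `α > 0`, and all `x, y ∈ G`,
`p^α_G(x,y) ≤ √((α+4)/α) · j*_G(x,y)`. -/
theorem stmt_1 (n : ℕ) (hn : 1 ≤ n) (G : Set (EuclideanSpace ℝ (Fin n)))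
    (hGopen : IsOpen G) (hGconn : IsConnected G) (hGproper : G ≠ Set.univ)
    (α : ℝ) (hα : 0 < α)
    (x y : EuclideanSpace ℝ (Fin n)) (hx : x ∈ G) (hy : y ∈ G) :
    dist x y /
        Real.sqrt (dist x y ^ 2 +
          α * Metric.infDist x (frontier G) * Metric.infDist y (frontier G)) ≤
      Real.sqrt ((α + 4) / α) *
        (dist x y /
          (dist x y + 2 * min (Metric.infDist x (frontier G)) (Metric.infDist y (frontier G)))) :=
  stmt_1_general n G α hα x y
end

section
/- Let G ⊊ ℝⁿ be a domain and α > 0. If x, y ∈ G are distinct points with d_G(x) = d_G(y) and |x−y| = (α/2)·d_G(x), then equality p^α_G(x,y) = √((α+4)/α) · j*_G(x,y) holds. -/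
/-! With `d = d_G(x) = d_G(y) > 0` and `|x - y| = α d / 2`, both sides reduce to `√(α / (α + 4))`:
`p^α_G(x, y) = (α/2) / √(α²/4 + α)` and `j*_G(x, y) = α / (α + 4)`. -/

open Metric

noncomputable def pointPairFunction {X : Type*} [PseudoMetricSpace X] (α : ℝ) (G : Set X) (x y : X) :
    ℝ :=
  dist x y / Real.sqrt (dist x y ^ 2 + α * infDist x (frontier G) * infDist y (frontier G))

noncomputable def jStarMetric {X : Type*} [PseudoMetricSpace X] (G : Set X) (x y : X) : ℝ :=
  dist x y / (dist x y + 2 * min (infDist x (frontier G)) (infDist y (frontier G)))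

theorem IsOpen.infDist_frontier_pos {X : Type*} [PseudoMetricSpace X] [PreconnectedSpace X] {G : Set X}
    (hG : IsOpen G) (hGne : G ≠ Set.univ) {x : X} (hx : x ∈ G) : 0 < infDist x (frontier G) := by
  have hfr : (frontier G).Nonempty := nonempty_frontier_iff.mpr ⟨⟨x, hx⟩, hGne⟩
  refine (isClosed_frontier.notMem_iff_infDist_pos hfr).mp fun hxG => ?_
  exact hG.frontier_eq.subset hxG |>.2 hx

theorem div_sqrt_sq_add_eq_sqrt_div_mul {α d : ℝ} (hα : 0 < α) (hd : 0 < d) :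
    α / 2 * d / Real.sqrt ((α / 2 * d) ^ 2 + α * d * d) =
      Real.sqrt ((α + 4) / α) * (α / 2 * d / (α / 2 * d + 2 * d)) := by
  have h4 : 0 < α + 4 := by linarith
  have hlhs : α / 2 * d / Real.sqrt ((α / 2 * d) ^ 2 + α * d * d) = Real.sqrt (α / (α + 4)) := by
    nth_rw 1 [← Real.sqrt_sq (by positivity : 0 ≤ α / 2 * d)]
    rw [← Real.sqrt_div' _ (by positivity)]
    congr 1
    field_simp
    ring
  have hj : α / 2 * d / (α / 2 * d + 2 * d) = α / (α + 4) := by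
    field_simp
    ring
  have hrhs : Real.sqrt ((α + 4) / α) * (α / (α + 4)) = Real.sqrt (α / (α + 4)) := by
    nth_rw 1 [← Real.sqrt_sq (by positivity : 0 ≤ α / (α + 4))]
    rw [← Real.sqrt_mul (by positivity)]
    congr 1
    field_simp
  rw [hlhs, hj, hrhs]

theorem pointPairFunction_eq_sqrt_mul_jStarMetric {X : Type*} [PseudoMetricSpace X] {α : ℝ}
    (hα : 0 < α) {G : Set X} {x y : X} (hpos : 0 < infDist x (frontier G))
    (hd : infDist x (frontier G) = infDist y (frontier G))
    (hdist : dist x y = α / 2 * infDist x (frontier G)) :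
    pointPairFunction α G x y = Real.sqrt ((α + 4) / α) * jStarMetric G x y := by
  rw [pointPairFunction, jStarMetric, ← hd, hdist, min_self]
  exact div_sqrt_sq_add_eq_sqrt_div_mul hα hpos

theorem stmt_2_general (n : ℕ) (G : Set (EuclideanSpace ℝ (Fin n)))
    (hGopen : IsOpen G) (hGproper : G ≠ Set.univ)
    (α : ℝ) (hα : 0 < α)
    (x y : EuclideanSpace ℝ (Fin n)) (hx : x ∈ G)
    (hd : Metric.infDist x (frontier G) = Metric.infDist y (frontier G))
    (hdist : dist x y = α / 2 * Metric.infDist x (frontier G)) :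
    dist x y /
        Real.sqrt (dist x y ^ 2 +
          α * Metric.infDist x (frontier G) * Metric.infDist y (frontier G)) =
      Real.sqrt ((α + 4) / α) *
        (dist x y /
          (dist x y + 2 * min (Metric.infDist x (frontier G)) (Metric.infDist y (frontier G)))) :=
  pointPairFunction_eq_sqrt_mul_jStarMetric hα (hGopen.infDist_frontier_pos hGproper hx) hd hdist

/-- If `x, y ∈ G` are distinct points with `d_G(x) = d_G(y)` and `|x−y| = (α/2)·d_G(x)`,
then `p^α_G(x,y) = √((α+4)/α) · j*_G(x,y)`. -/
theorem stmt_2 (n : ℕ) (hn : 1 ≤ n) (G : Set (EuclideanSpace ℝ (Fin n)))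
    (hGopen : IsOpen G) (hGconn : IsConnected G) (hGproper : G ≠ Set.univ)
    (α : ℝ) (hα : 0 < α)
    (x y : EuclideanSpace ℝ (Fin n)) (hx : x ∈ G) (hy : y ∈ G) (hxy : x ≠ y)
    (hd : Metric.infDist x (frontier G) = Metric.infDist y (frontier G))
    (hdist : dist x y = α / 2 * Metric.infDist x (frontier G)) :
    dist x y /
        Real.sqrt (dist x y ^ 2 +
          α * Metric.infDist x (frontier G) * Metric.infDist y (frontier G)) =
      Real.sqrt ((α + 4) / α) *
        (dist x y /
          (dist x y + 2 * min (Metric.infDist x (frontier G)) (Metric.infDist y (frontier G)))) :=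
  stmt_2_general n G hGopen hGproper α hα x y hx hd hdist
end

section
/- For every domain G ⊊ ℝⁿ, every α > 0, and every ε > 0, there exist distinct points x, y ∈ G such that p^α_G(x,y) < (min{1, 2/√α} + ε) · j*_G(x,y); that is, the constant min{1, 2/√α} in the lower bound min{1, 2/√α}·j*_G(x,y) ≤ p^α_G(x,y) is best possible for every choice of the domain G. -/
/-!
Near the boundary, `j*_G(x, y)` tends to `1` while `p^α_G ≤ 1`: take `x` fixed and `y` close
to a boundary point. Near a fixed point `x`: as `t = |x - y| → 0` we have `d_G(y) → d_G(x)`, so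
`p^α_G / j*_G = (t + 2 min{d_G(x), d_G(y)}) / √(t² + α d_G(x) d_G(y)) → 2 / √α`.
Whichever of `1` and `2 / √α` is smaller is therefore approached.
-/

open Metric

noncomputable section

section MetricSpace

variable {X : Type*} [MetricSpace X]

def boundaryDist (G : Set X) (x : X) : ℝ :=
  infDist x (frontier G)

def pointPair (α : ℝ) (G : Set X) (x y : X) : ℝ :=
  dist x y / √(dist x y ^ 2 + α * boundaryDist G x * boundaryDist G y)

def jStar (G : Set X) (x y : X) : ℝ :=
  dist x y / (dist x y + 2 * min (boundaryDist G x) (boundaryDist G y))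

variable {G : Set X}

lemma boundaryDist_nonneg (G : Set X) (x : X) : 0 ≤ boundaryDist G x :=
  infDist_nonneg

lemma boundaryDist_pos (hG : IsOpen G) (hfr : (frontier G).Nonempty) {x : X} (hx : x ∈ G) :
    0 < boundaryDist G x :=
  (isClosed_frontier.notMem_iff_infDist_pos hfr).mp fun hx' => (hG.frontier_eq ▸ hx').2 hx

lemma pointPair_lt_mul_jStar {α K : ℝ} (hα : 0 ≤ α) {x y : X} (hxy : x ≠ y)
    (h : dist x y + 2 * min (boundaryDist G x) (boundaryDist G y) <
      K * √(dist x y ^ 2 + α * boundaryDist G x * boundaryDist G y)) :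
    pointPair α G x y < K * jStar G x y := by
  have ht : 0 < dist x y := dist_pos.mpr hxy
  have hdx := boundaryDist_nonneg G x
  have hdy := boundaryDist_nonneg G y
  have hsqrt : 0 < √(dist x y ^ 2 + α * boundaryDist G x * boundaryDist G y) :=
    Real.sqrt_pos.mpr (add_pos_of_pos_of_nonneg (by positivity) (by positivity))
  have hden : 0 < dist x y + 2 * min (boundaryDist G x) (boundaryDist G y) := by
    have := le_min hdx hdy
    linarith
  rw [pointPair, jStar, mul_div_assoc', div_lt_div_iff₀ hsqrt hden]
  nlinarith

lemma exists_two_mul_min_boundaryDist_lt (hG : IsOpen G) (hne : G.Nonempty)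
    (hfr : (frontier G).Nonempty) {ε : ℝ} (hε : 0 < ε) :
    ∃ x ∈ G, ∃ y ∈ G, x ≠ y ∧
      2 * min (boundaryDist G x) (boundaryDist G y) < ε * dist x y := by
  obtain ⟨x, hx⟩ := hne
  obtain ⟨z, hz⟩ := hfr
  have hr : 0 < dist x z :=
    dist_pos.mpr fun hxz => (hG.frontier_eq ▸ hxz ▸ hz).2 hx
  set r := dist x z
  obtain ⟨y, hy, hzy⟩ := mem_closure_iff.mp (frontier_subset_closure hz) (min (r / 2) (ε * r / 4))
    (lt_min (by linarith) (by positivity))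
  have hzy₁ : dist z y < r / 2 := hzy.trans_le (min_le_left _ _)
  have hzy₂ : dist z y < ε * r / 4 := hzy.trans_le (min_le_right _ _)
  have hdy : boundaryDist G y ≤ dist z y := dist_comm z y ▸ infDist_le_dist_of_mem hz
  have hxy : r / 2 ≤ dist x y := by linarith [dist_triangle x y z, dist_comm y z]
  refine ⟨x, hx, y, hy, dist_pos.mp (by linarith), ?_⟩
  have := min_le_right (boundaryDist G x) (boundaryDist G y)
  nlinarith

lemma exists_pointPair_lt_one_add_mul_jStar (hG : IsOpen G) (hne : G.Nonempty)
    (hfr : (frontier G).Nonempty) {α ε : ℝ} (hα : 0 ≤ α) (hε : 0 < ε) :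
    ∃ x ∈ G, ∃ y ∈ G, x ≠ y ∧ pointPair α G x y < (1 + ε) * jStar G x y := by
  obtain ⟨x, hx, y, hy, hxy, hmin⟩ := exists_two_mul_min_boundaryDist_lt hG hne hfr hε
  refine ⟨x, hx, y, hy, hxy, pointPair_lt_mul_jStar hα hxy ?_⟩
  have : dist x y ≤ √(dist x y ^ 2 + α * boundaryDist G x * boundaryDist G y) :=
    Real.le_sqrt_of_sq_le (le_add_of_nonneg_right
      (mul_nonneg (mul_nonneg hα (boundaryDist_nonneg G x)) (boundaryDist_nonneg G y)))
  nlinarith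

end MetricSpace

/-- With `δ = ε √α`, the smallness condition makes `t + 2a < (2 + δ)(a - t)`, and
`√α (a - t) ≤ √(α a b)` because `(a - t)² ≤ a b`. -/
lemma add_two_mul_min_lt_mul_sqrt {α ε t a b : ℝ} (hα : 0 < α) (hε : 0 < ε) (ht : 0 < t)
    (hb : a - t ≤ b) (hsmall : (3 + ε * √α) * t < ε * √α * a) :
    t + 2 * min a b < (2 / √α + ε) * √(t ^ 2 + α * a * b) := by
  have hsα : 0 < √α := Real.sqrt_pos.mpr hα
  have hta : t < a := by nlinarith [mul_pos hε hsα]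
  have hsq : √α * (a - t) ≤ √(t ^ 2 + α * a * b) := by
    apply Real.le_sqrt_of_sq_le
    have hab : (a - t) ^ 2 ≤ a * b := by nlinarith
    rw [mul_pow, Real.sq_sqrt hα.le]
    nlinarith [mul_le_mul_of_nonneg_left hab hα.le, sq_nonneg t]
  have hK : (2 / √α + ε) * √α = 2 + ε * √α := by
    rw [add_mul, div_mul_cancel₀ _ hsα.ne']
  calc t + 2 * min a b ≤ t + 2 * a := by linarith [min_le_left a b]
    _ < (2 + ε * √α) * (a - t) := by nlinarith
    _ = (2 / √α + ε) * (√α * (a - t)) := by rw [← mul_assoc, hK]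
    _ ≤ (2 / √α + ε) * √(t ^ 2 + α * a * b) := by gcongr

lemma exists_pointPair_lt_two_div_sqrt_add_mul_jStar {E : Type*} [NormedAddCommGroup E]
    [NormedSpace ℝ E] [Nontrivial E] {G : Set E} (hG : IsOpen G) (hne : G.Nonempty)
    (hfr : (frontier G).Nonempty) {α ε : ℝ} (hα : 0 < α) (hε : 0 < ε) :
    ∃ x ∈ G, ∃ y ∈ G, x ≠ y ∧ pointPair α G x y < (2 / √α + ε) * jStar G x y := by
  obtain ⟨x, hx⟩ := hne
  obtain ⟨ρ, hρ, hball⟩ := isOpen_iff.mp hG x hx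
  have hdx := boundaryDist_pos hG hfr hx
  have hc : 0 < ε * √α * boundaryDist G x / (3 + ε * √α) := by positivity
  obtain ⟨t, ht, htmin⟩ := exists_between (lt_min hρ hc)
  obtain ⟨htρ, htc⟩ := lt_min_iff.mp htmin
  obtain ⟨v, hv⟩ := exists_norm_eq E ht.le
  have hxy : dist x (x + v) = t := by simp [dist_eq_norm, hv]
  have hyG : x + v ∈ G := hball (by rw [mem_ball, dist_comm, hxy]; exact htρ)
  have hne : x ≠ x + v := fun h => by simp [← h] at hxy; linarith
  have hdy : boundaryDist G x - t ≤ boundaryDist G (x + v) := by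
    have := infDist_le_infDist_add_dist (x := x) (y := x + v) (s := frontier G)
    rw [hxy] at this
    exact sub_le_iff_le_add.mpr this
  refine ⟨x, hx, x + v, hyG, hne, pointPair_lt_mul_jStar hα.le hne ?_⟩
  rw [hxy]
  exact add_two_mul_min_lt_mul_sqrt hα hε ht hdy
    (by rwa [lt_div_iff₀ (by positivity), mul_comm] at htc)

/-- For every domain `G ⊊ ℝⁿ`, every `α > 0`, and every `ε > 0` there are distinct points
`x, y ∈ G` with `p^α_G(x,y) < (min{1, 2/√α} + ε) · j*_G(x,y)`: the constant
`min{1, 2/√α}` in the lower bound `min{1, 2/√α}·j*_G ≤ p^α_G` is best possible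
for every choice of the domain `G`. -/
theorem stmt_3 (n : ℕ) (hn : 1 ≤ n) (G : Set (EuclideanSpace ℝ (Fin n)))
    (hGopen : IsOpen G) (hGconn : IsConnected G) (hGproper : G ≠ Set.univ)
    (α : ℝ) (hα : 0 < α) (ε : ℝ) (hε : 0 < ε) :
    ∃ x ∈ G, ∃ y ∈ G, x ≠ y ∧
      dist x y /
          Real.sqrt (dist x y ^ 2 +
            α * Metric.infDist x (frontier G) * Metric.infDist y (frontier G)) <
        (min 1 (2 / Real.sqrt α) + ε) *
          (dist x y /
            (dist x y + 2 * min (Metric.infDist x (frontier G)) (Metric.infDist y (frontier G)))) := by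
  have : Nonempty (Fin n) := ⟨⟨0, hn⟩⟩
  have hfr : (frontier G).Nonempty := nonempty_frontier_iff.mpr ⟨hGconn.nonempty, hGproper⟩
  rcases min_choice 1 (2 / √α) with h | h <;> rw [h]
  · exact exists_pointPair_lt_one_add_mul_jStar hGopen hGconn.nonempty hfr hα.le hε
  · exact exists_pointPair_lt_two_div_sqrt_add_mul_jStar hGopen hGconn.nonempty hfr hα hε
end
end

section
/- Let G ⊊ ℝⁿ be a domain and α > 0. Suppose l ∈ G and r > 0 are such that the open ball B(l, r) is contained in G and there are points u, v ∈ ∂G with |u−l| = |v−l| = r and u + v = 2l (i.e., the endpoints of a diameter of the ball lie on ∂G). Then the points x = l + α(u−l)/(α+4) and y = l + α(v−l)/(α+4) lie in G, satisfy d_G(x) = d_G(y) = 4r/(α+4) and |x−y| = (α/2)·d_G(x), and hence p^α_G(x,y) = √((α+4)/α) · j*_G(x,y); in particular √((α+4)/α) is the best possible constant c such that p^α_G ≤ c·j*_G holds in such a domain. -/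
/-!
Every boundary point lies outside the open ball `B(l, r) ⊆ G`, so from a point `w` of the radius
`[l, u]` the boundary is at least `r - |w - l|` away, and the boundary point `u` realises this
distance. Hence `d_G(x) = d_G(y) = (1 - α/(α+4)) r = 4r/(α+4)`, while `x` and `y` lie on the
diameter `[u, v]` at distance `2αr/(α+4) = (α/2) d_G(x)`. For such a pair `p^α_G / j*_G` equals
`√((α+4)/α)`, so no smaller constant can bound `p^α_G` by a multiple of `j*_G`.
-/

open Metric

section PseudoMetricSpace

variable {X : Type*} [PseudoMetricSpace X] {G : Set X} {l u x z : X} {r : ℝ}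

lemma le_dist_of_mem_frontier_of_ball_subset (hball : ball l r ⊆ G) (hz : z ∈ frontier G) :
    r ≤ dist z l := by
  by_contra! h
  exact disjoint_interior_frontier.le_bot
    ⟨interior_maximal hball isOpen_ball (mem_ball.mpr h), hz⟩

lemma infDist_frontier_eq_of_ball_subset (hball : ball l r ⊆ G) (hu : u ∈ frontier G)
    (hx : dist x l + dist x u ≤ r) : infDist x (frontier G) = dist x u := by
  refine le_antisymm (infDist_le_dist_of_mem hu) ((le_infDist ⟨u, hu⟩).mpr fun z hz => ?_)
  have hrz := le_dist_of_mem_frontier_of_ball_subset hball hz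
  have htri := dist_triangle z x l
  rw [dist_comm z x] at htri
  linarith

end PseudoMetricSpace

section NormedSpace

variable {E : Type*} [NormedAddCommGroup E] [NormedSpace ℝ E]

lemma dist_add_smul_sub_left (l u : E) (t : ℝ) : dist (l + t • (u - l)) l = |t| * dist u l := by
  rw [add_comm, ← AffineMap.lineMap_apply_module', dist_lineMap_left, Real.norm_eq_abs,
    dist_comm]

lemma dist_add_smul_sub_right (l u : E) (t : ℝ) :
    dist (l + t • (u - l)) u = |1 - t| * dist u l := by
  rw [add_comm, ← AffineMap.lineMap_apply_module', dist_lineMap_right, Real.norm_eq_abs,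
    dist_comm]

lemma dist_add_smul_sub_add_smul_sub (l u v : E) (t : ℝ) :
    dist (l + t • (u - l)) (l + t • (v - l)) = |t| * dist u v := by
  rw [dist_add_left, dist_smul₀, dist_sub_right, Real.norm_eq_abs]

lemma dist_eq_two_mul_of_add_eq_two_smul {l u v : E} {r : ℝ} (hur : dist u l = r)
    (huv : u + v = (2 : ℝ) • l) : dist u v = 2 * r := by
  have huv' : u - v = (2 : ℝ) • (u - l) := by
    rw [eq_sub_of_add_eq' huv]
    module
  rw [dist_eq_norm, huv', norm_smul, ← dist_eq_norm, hur, Real.norm_two]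

lemma infDist_frontier_add_smul_sub {G : Set E} {l u : E} {r t : ℝ} (hball : ball l r ⊆ G)
    (hu : u ∈ frontier G) (hur : dist u l = r) (ht₀ : 0 ≤ t) (ht₁ : t ≤ 1) :
    infDist (l + t • (u - l)) (frontier G) = (1 - t) * r := by
  have hsegment : dist (l + t • (u - l)) l + dist (l + t • (u - l)) u ≤ r := by
    rw [dist_add_smul_sub_left, dist_add_smul_sub_right, abs_of_nonneg ht₀,
      abs_of_nonneg (sub_nonneg.mpr ht₁)]
    linarith
  rw [infDist_frontier_eq_of_ball_subset hball hu hsegment, dist_add_smul_sub_right,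
    abs_of_nonneg (sub_nonneg.mpr ht₁), hur]

end NormedSpace

/-- `p^α_G(x, y) = √((α+4)/α) · j*_G(x, y)` whenever `d_G(x) = d_G(y) = d` and
`|x - y| = (α/2) d`. -/
lemma pointPair_eq_sqrt_mul_jStar {α d : ℝ} (hα : 0 < α) (hd : 0 < d) :
    α / 2 * d / √((α / 2 * d) ^ 2 + α * d * d) =
      √((α + 4) / α) * (α / 2 * d / (α / 2 * d + 2 * d)) := by
  have hs : √(α * (α + 4)) ^ 2 = α * (α + 4) := Real.sq_sqrt (by positivity)
  have hp : √((α / 2 * d) ^ 2 + α * d * d) = d * √(α * (α + 4)) / 2 := by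
    rw [show (α / 2 * d) ^ 2 + α * d * d = (d / 2) ^ 2 * (α * (α + 4)) by ring,
      Real.sqrt_mul (sq_nonneg _), Real.sqrt_sq (by positivity)]
    ring
  have hc : √((α + 4) / α) = √(α * (α + 4)) / α := by
    rw [show (α + 4) / α = α * (α + 4) / α ^ 2 by field_simp,
      Real.sqrt_div (by positivity), Real.sqrt_sq hα.le]
  rw [hp, hc]
  field_simp
  linear_combination -hs

theorem stmt_4_general (n : ℕ) (G : Set (EuclideanSpace ℝ (Fin n)))
    (α : ℝ) (hα : 0 < α)
    (l : EuclideanSpace ℝ (Fin n)) (r : ℝ) (hr : 0 < r)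
    (hball : Metric.ball l r ⊆ G)
    (u v : EuclideanSpace ℝ (Fin n)) (hu : u ∈ frontier G) (hv : v ∈ frontier G)
    (hur : dist u l = r) (hvr : dist v l = r) (huv : u + v = (2 : ℝ) • l)
    (x y : EuclideanSpace ℝ (Fin n))
    (hxdef : x = l + (α / (α + 4)) • (u - l))
    (hydef : y = l + (α / (α + 4)) • (v - l)) :
    x ∈ G ∧ y ∈ G ∧
      Metric.infDist x (frontier G) = 4 * r / (α + 4) ∧
      Metric.infDist y (frontier G) = 4 * r / (α + 4) ∧
      dist x y = α / 2 * Metric.infDist x (frontier G) ∧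
      dist x y /
          Real.sqrt (dist x y ^ 2 +
            α * Metric.infDist x (frontier G) * Metric.infDist y (frontier G)) =
        Real.sqrt ((α + 4) / α) *
          (dist x y /
            (dist x y +
              2 * min (Metric.infDist x (frontier G)) (Metric.infDist y (frontier G)))) ∧
      ∀ c : ℝ,
        (∀ a ∈ G, ∀ b ∈ G,
            dist a b /
                Real.sqrt (dist a b ^ 2 +
                  α * Metric.infDist a (frontier G) * Metric.infDist b (frontier G)) ≤
              c *
                (dist a b /
                  (dist a b +
                    2 * min (Metric.infDist a (frontier G)) (Metric.infDist b (frontier G))))) →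
          Real.sqrt ((α + 4) / α) ≤ c := by
  set t := α / (α + 4) with ht
  have ht₀ : 0 ≤ t := by positivity
  have ht₁ : t < 1 := (div_lt_one (by linarith)).mpr (by linarith)
  have hd : 4 * r / (α + 4) = (1 - t) * r := by rw [ht]; field_simp; ring
  have hd₀ : 0 < 4 * r / (α + 4) := by positivity
  have hmem : ∀ w, dist w l = r → l + t • (w - l) ∈ G := fun w hw => hball <| by
    rw [mem_ball, dist_add_smul_sub_left, hw, abs_of_nonneg ht₀]
    nlinarith
  have hdx : infDist x (frontier G) = 4 * r / (α + 4) := by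
    rw [hxdef, hd, infDist_frontier_add_smul_sub hball hu hur ht₀ ht₁.le]
  have hdy : infDist y (frontier G) = 4 * r / (α + 4) := by
    rw [hydef, hd, infDist_frontier_add_smul_sub hball hv hvr ht₀ ht₁.le]
  have hxy : dist x y = α / 2 * (4 * r / (α + 4)) := by
    rw [hxdef, hydef, dist_add_smul_sub_add_smul_sub, dist_eq_two_mul_of_add_eq_two_smul hur huv,
      abs_of_nonneg ht₀, ht]
    field_simp
    ring
  have hpj := pointPair_eq_sqrt_mul_jStar hα hd₀
  refine ⟨hxdef ▸ hmem u hur, hydef ▸ hmem v hvr, hdx, hdy, by rw [hxy, hdx], ?_, ?_⟩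
  · rwa [hdx, hdy, hxy, min_self]
  · intro c hc
    have hbound := hc x (hxdef ▸ hmem u hur) y (hydef ▸ hmem v hvr)
    rw [hdx, hdy, hxy, min_self, hpj] at hbound
    exact le_of_mul_le_mul_right hbound (by positivity)

/-- If `G` contains an open ball `B(l,r)` whose diameter endpoints `u, v` lie on `∂G`,
then the points `x = l + α(u−l)/(α+4)` and `y = l + α(v−l)/(α+4)` lie in `G`, satisfy
`d_G(x) = d_G(y) = 4r/(α+4)` and `|x−y| = (α/2)·d_G(x)`, hence
`p^α_G(x,y) = √((α+4)/α) · j*_G(x,y)`; in particular `√((α+4)/α)` is the best possible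
constant `c` with `p^α_G ≤ c·j*_G` in such a domain. -/
theorem stmt_4 (n : ℕ) (hn : 1 ≤ n) (G : Set (EuclideanSpace ℝ (Fin n)))
    (hGopen : IsOpen G) (hGconn : IsConnected G) (hGproper : G ≠ Set.univ)
    (α : ℝ) (hα : 0 < α)
    (l : EuclideanSpace ℝ (Fin n)) (r : ℝ) (hr : 0 < r) (hl : l ∈ G)
    (hball : Metric.ball l r ⊆ G)
    (u v : EuclideanSpace ℝ (Fin n)) (hu : u ∈ frontier G) (hv : v ∈ frontier G)
    (hur : dist u l = r) (hvr : dist v l = r) (huv : u + v = (2 : ℝ) • l)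
    (x y : EuclideanSpace ℝ (Fin n))
    (hxdef : x = l + (α / (α + 4)) • (u - l))
    (hydef : y = l + (α / (α + 4)) • (v - l)) :
    x ∈ G ∧ y ∈ G ∧
      Metric.infDist x (frontier G) = 4 * r / (α + 4) ∧
      Metric.infDist y (frontier G) = 4 * r / (α + 4) ∧
      dist x y = α / 2 * Metric.infDist x (frontier G) ∧
      dist x y /
          Real.sqrt (dist x y ^ 2 +
            α * Metric.infDist x (frontier G) * Metric.infDist y (frontier G)) =
        Real.sqrt ((α + 4) / α) *
          (dist x y /
            (dist x y +
              2 * min (Metric.infDist x (frontier G)) (Metric.infDist y (frontier G)))) ∧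
      ∀ c : ℝ,
        (∀ a ∈ G, ∀ b ∈ G,
            dist a b /
                Real.sqrt (dist a b ^ 2 +
                  α * Metric.infDist a (frontier G) * Metric.infDist b (frontier G)) ≤
              c *
                (dist a b /
                  (dist a b +
                    2 * min (Metric.infDist a (frontier G)) (Metric.infDist b (frontier G))))) →
          Real.sqrt ((α + 4) / α) ≤ c :=
  stmt_4_general n G α hα l r hr hball u v hu hv hur hvr huv x y hxdef hydef
end

section
/- For every domain G ⊊ ℝⁿ, every 0 < α ≤ 4, and all points x, y ∈ G, the two-sided inequality (1/2)·s_G(x,y) ≤ p^α_G(x,y) ≤ √((α+4)/α)·s_G(x,y) holds. -/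
/-!
Write `t = inf_{z ∈ ∂G} (|x - z| + |z - y|)`, `d = |x - y|` and `a, b` for the boundary distances
of `x, y`. The triangle inequality gives `d ≤ t`, `a + b ≤ t` and, taking `z` nearly closest to
`x` (or to `y`), `t ≤ d + 2 min(a, b)`. Both bounds are then elementary inequalities in these
four numbers: `d² + α a b ≤ d² + α t² / 4 ≤ 4 t²` for `α ≤ 4`, and with `u = t - d ≤ 2 √(a b)`,
`(α + 4)(d² + α a b) - α t² ≥ (2 d - α u / 2)² ≥ 0`.
-/

open Metric

section TriangularInf

variable {X : Type*} [MetricSpace X] {F : Set X}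

lemma dist_le_sInf_dist_add_dist (hF : F.Nonempty) (x y : X) :
    dist x y ≤ sInf ((fun z => dist x z + dist z y) '' F) :=
  le_csInf (hF.image _) <| by
    rintro _ ⟨z, -, rfl⟩
    exact dist_triangle x z y

lemma infDist_add_infDist_le_sInf_dist_add_dist (hF : F.Nonempty) (x y : X) :
    infDist x F + infDist y F ≤ sInf ((fun z => dist x z + dist z y) '' F) :=
  le_csInf (hF.image _) <| by
    rintro _ ⟨z, hz, rfl⟩
    have hy : infDist y F ≤ dist z y := dist_comm y z ▸ infDist_le_dist_of_mem hz
    exact add_le_add (infDist_le_dist_of_mem hz) hy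

lemma sInf_dist_add_dist_le_dist_add_two_mul_min_infDist (hF : F.Nonempty) (x y : X) :
    sInf ((fun z => dist x z + dist z y) '' F) ≤
      dist x y + 2 * min (infDist x F) (infDist y F) := by
  set t := sInf ((fun z => dist x z + dist z y) '' F)
  have ht : ∀ z ∈ F, t ≤ dist x z + dist z y := fun z hz =>
    csInf_le ⟨0, by rintro _ ⟨w, -, rfl⟩; positivity⟩ ⟨z, hz, rfl⟩
  suffices (t - dist x y) / 2 ≤ min (infDist x F) (infDist y F) by linarith
  refine le_min ((le_infDist hF).2 fun z hz => ?_) ((le_infDist hF).2 fun z hz => ?_)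
  · linarith [ht z hz, dist_triangle z x y, dist_comm x z]
  · linarith [ht z hz, dist_triangle x y z, dist_comm y z]

end TriangularInf

section PointPairBounds

variable {d a b t α : ℝ}

lemma sqrt_sq_add_mul_mul_le_two_mul (hd : 0 ≤ d) (ha : 0 ≤ a) (hb : 0 ≤ b) (hdt : d ≤ t)
    (habt : a + b ≤ t) (hα : 0 ≤ α) (hα4 : α ≤ 4) : √(d ^ 2 + α * a * b) ≤ 2 * t := by
  have ht : 0 ≤ t := by linarith
  have hab : 4 * (a * b) ≤ t ^ 2 := by nlinarith [sq_nonneg (a - b)]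
  rw [Real.sqrt_le_left (by positivity)]
  nlinarith [mul_le_mul_of_nonneg_left hab hα, pow_le_pow_left₀ hd hdt 2]

lemma le_sqrt_mul_sqrt_sq_add_mul_mul (hd : 0 ≤ d) (ha : 0 ≤ a) (hb : 0 ≤ b) (hdt : d ≤ t)
    (htd : t ≤ d + 2 * min a b) (hα0 : 0 < α) :
    t ≤ √((α + 4) / α) * √(d ^ 2 + α * a * b) := by
  have hgap : (t - d) ^ 2 ≤ 4 * (a * b) := by
    have h := pow_le_pow_left₀ (sub_nonneg.2 hdt) (by linarith : t - d ≤ 2 * min a b) 2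
    nlinarith [min_le_left a b, min_le_right a b, le_min ha hb]
  rw [← Real.sqrt_mul (by positivity), Real.le_sqrt (by linarith) (by positivity),
    div_mul_eq_mul_div, le_div_iff₀ hα0]
  nlinarith [sq_nonneg (4 * d - α * (t - d)), mul_le_mul_of_nonneg_left hgap hα0.le]

lemma half_div_le_div_sqrt_and_div_sqrt_le (hd : 0 ≤ d) (ha : 0 ≤ a) (hb : 0 ≤ b)
    (hdt : d ≤ t) (habt : a + b ≤ t) (htd : t ≤ d + 2 * min a b) (hα0 : 0 < α) (hα4 : α ≤ 4) :
    1 / 2 * (d / t) ≤ d / √(d ^ 2 + α * a * b) ∧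
      d / √(d ^ 2 + α * a * b) ≤ √((α + 4) / α) * (d / t) := by
  rcases hd.eq_or_lt with rfl | hd
  · simp
  have ht : 0 < t := hd.trans_le hdt
  have hD : 0 < √(d ^ 2 + α * a * b) := Real.sqrt_pos.2 (by positivity)
  constructor
  · calc 1 / 2 * (d / t) = d / (2 * t) := by ring
      _ ≤ d / √(d ^ 2 + α * a * b) := div_le_div_of_nonneg_left hd.le hD
        (sqrt_sq_add_mul_mul_le_two_mul hd.le ha hb hdt habt hα0.le hα4)
  · rw [mul_div_assoc', div_le_div_iff₀ hD ht]
    calc d * t ≤ d * (√((α + 4) / α) * √(d ^ 2 + α * a * b)) := mul_le_mul_of_nonneg_left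
          (le_sqrt_mul_sqrt_sq_add_mul_mul hd.le ha hb hdt htd hα0) hd.le
      _ = √((α + 4) / α) * d * √(d ^ 2 + α * a * b) := by ring

end PointPairBounds

theorem stmt_9_general (n : ℕ) (G : Set (EuclideanSpace ℝ (Fin n)))
    (hGproper : G ≠ Set.univ)
    (α : ℝ) (hα0 : 0 < α) (hα4 : α ≤ 4)
    (x y : EuclideanSpace ℝ (Fin n)) (hx : x ∈ G) :
    1 / 2 * (dist x y / sInf ((fun z => dist x z + dist z y) '' frontier G)) ≤
        dist x y /
          Real.sqrt (dist x y ^ 2 +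
            α * Metric.infDist x (frontier G) * Metric.infDist y (frontier G)) ∧
      dist x y /
          Real.sqrt (dist x y ^ 2 +
            α * Metric.infDist x (frontier G) * Metric.infDist y (frontier G)) ≤
        Real.sqrt ((α + 4) / α) *
          (dist x y / sInf ((fun z => dist x z + dist z y) '' frontier G)) := by
  have hF : (frontier G).Nonempty := nonempty_frontier_iff.2 ⟨⟨x, hx⟩, hGproper⟩
  exact half_div_le_div_sqrt_and_div_sqrt_le dist_nonneg infDist_nonneg infDist_nonneg
    (dist_le_sInf_dist_add_dist hF x y) (infDist_add_infDist_le_sInf_dist_add_dist hF x y)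
    (sInf_dist_add_dist_le_dist_add_two_mul_min_infDist hF x y) hα0 hα4

/-- For every domain `G ⊊ ℝⁿ`, every `0 < α ≤ 4`, and all `x, y ∈ G`:
`(1/2)·s_G(x,y) ≤ p^α_G(x,y) ≤ √((α+4)/α)·s_G(x,y)`, where
`s_G(x,y) = |x−y| / inf{|x−z| + |z−y| : z ∈ ∂G}` is the triangular ratio metric. -/
theorem stmt_9 (n : ℕ) (hn : 1 ≤ n) (G : Set (EuclideanSpace ℝ (Fin n)))
    (hGopen : IsOpen G) (hGconn : IsConnected G) (hGproper : G ≠ Set.univ)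
    (α : ℝ) (hα0 : 0 < α) (hα4 : α ≤ 4)
    (x y : EuclideanSpace ℝ (Fin n)) (hx : x ∈ G) (hy : y ∈ G) :
    1 / 2 * (dist x y / sInf ((fun z => dist x z + dist z y) '' frontier G)) ≤
        dist x y /
          Real.sqrt (dist x y ^ 2 +
            α * Metric.infDist x (frontier G) * Metric.infDist y (frontier G)) ∧
      dist x y /
          Real.sqrt (dist x y ^ 2 +
            α * Metric.infDist x (frontier G) * Metric.infDist y (frontier G)) ≤
        Real.sqrt ((α + 4) / α) *
          (dist x y / sInf ((fun z => dist x z + dist z y) '' frontier G)) :=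
  stmt_9_general n G hGproper α hα0 hα4 x y hx
end

section
/- For every domain G ⊊ ℝⁿ, every 0 < α < 2, and all points x, y ∈ G, the two-sided inequality t_G(x,y) ≤ p^α_G(x,y) ≤ (4/√(α(4−α)))·t_G(x,y) holds. -/
/-!
Write `r = |x - y|`, `a = d_G(x)`, `b = d_G(y)`. Both inequalities compare the denominators
`√(r² + α a b)` and `r + a + b`. The lower bound is `(a + b)² ≥ 4ab ≥ α ab`. The upper bound rests on
the identity
`16 (r² + α a b) - α (4 - α) (r + a + b)² = ((4 - α) r - α (a + b))² + 4 α (r² - (a - b)²)`,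
whose right side is nonnegative because `d_G` is 1-Lipschitz, i.e. `|a - b| ≤ r`.
-/

open Metric

section

variable {E : Type*} [PseudoMetricSpace E]

noncomputable def tMetric (G : Set E) (x y : E) : ℝ :=
  dist x y / (dist x y + infDist x (frontier G) + infDist y (frontier G))

noncomputable def pointPairFun (α : ℝ) (G : Set E) (x y : E) : ℝ :=
  dist x y / √(dist x y ^ 2 + α * infDist x (frontier G) * infDist y (frontier G))

lemma sq_add_mul_mul_le_sq {r a b α : ℝ} (hr : 0 ≤ r) (ha : 0 ≤ a) (hb : 0 ≤ b) (hα4 : α ≤ 4) :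
    r ^ 2 + α * a * b ≤ (r + a + b) ^ 2 := by
  nlinarith [sq_nonneg (a - b), mul_nonneg ha hb, mul_nonneg hr ha, mul_nonneg hr hb]

lemma mul_four_sub_mul_sq_le {r a b α : ℝ} (hab : a ≤ b + r) (hba : b ≤ a + r) (hα : 0 ≤ α) :
    α * (4 - α) * (r + a + b) ^ 2 ≤ 16 * (r ^ 2 + α * a * b) := by
  have hlip : 0 ≤ (r - a + b) * (r + a - b) := mul_nonneg (by linarith) (by linarith)
  nlinarith [sq_nonneg ((4 - α) * r - α * (a + b)), mul_nonneg hα hlip]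

lemma tMetric_le_pointPairFun (G : Set E) (x y : E) {α : ℝ} (hα : 0 ≤ α) (hα4 : α ≤ 4) :
    tMetric G x y ≤ pointPairFun α G x y := by
  rcases (dist_nonneg (x := x) (y := y)).eq_or_lt with hxy | hxy
  · simp [tMetric, pointPairFun, ← hxy]
  have ha := infDist_nonneg (x := x) (s := frontier G)
  have hb := infDist_nonneg (x := y) (s := frontier G)
  apply div_le_div_of_nonneg_left hxy.le (Real.sqrt_pos.mpr (by positivity))
  exact (Real.sqrt_le_left (by positivity)).mpr (sq_add_mul_mul_le_sq hxy.le ha hb hα4)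

lemma pointPairFun_le_mul_tMetric (G : Set E) (x y : E) {α : ℝ} (hα : 0 < α) (hα4 : α < 4) :
    pointPairFun α G x y ≤ 4 / √(α * (4 - α)) * tMetric G x y := by
  rcases (dist_nonneg (x := x) (y := y)).eq_or_lt with hxy | hxy
  · simp [tMetric, pointPairFun, ← hxy]
  set r := dist x y
  set a := infDist x (frontier G)
  set b := infDist y (frontier G)
  have ha : 0 ≤ a := infDist_nonneg
  have hb : 0 ≤ b := infDist_nonneg
  have hab : a ≤ b + r := infDist_le_infDist_add_dist
  have hba : b ≤ a + r := by simpa only [dist_comm] using infDist_le_infDist_add_dist (x := y) (y := x)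
  have hc : 0 < α * (4 - α) := mul_pos hα (by linarith)
  have hQ : 0 < r ^ 2 + α * a * b := by positivity
  have hden : √(α * (4 - α)) * (r + a + b) ≤ 4 * √(r ^ 2 + α * a * b) := by
    rw [← pow_le_pow_iff_left₀ (by positivity) (by positivity) two_ne_zero, mul_pow, mul_pow,
      Real.sq_sqrt hc.le, Real.sq_sqrt hQ.le]
    linarith [mul_four_sub_mul_sq_le hab hba hα.le]
  rw [tMetric, pointPairFun, div_mul_div_comm, div_le_div_iff₀ (Real.sqrt_pos.mpr hQ) (by positivity)]
  calc r * (√(α * (4 - α)) * (r + a + b)) ≤ r * (4 * √(r ^ 2 + α * a * b)) := by gcongr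
    _ = 4 * r * √(r ^ 2 + α * a * b) := by ring

end

theorem stmt_12_general (n : ℕ) (G : Set (EuclideanSpace ℝ (Fin n)))
    (α : ℝ) (hα0 : 0 < α) (hα2 : α < 2)
    (x y : EuclideanSpace ℝ (Fin n)) :
    dist x y / (dist x y + Metric.infDist x (frontier G) + Metric.infDist y (frontier G)) ≤
        dist x y /
          Real.sqrt (dist x y ^ 2 +
            α * Metric.infDist x (frontier G) * Metric.infDist y (frontier G)) ∧
      dist x y /
          Real.sqrt (dist x y ^ 2 +
            α * Metric.infDist x (frontier G) * Metric.infDist y (frontier G)) ≤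
        4 / Real.sqrt (α * (4 - α)) *
          (dist x y /
            (dist x y + Metric.infDist x (frontier G) + Metric.infDist y (frontier G))) :=
  ⟨tMetric_le_pointPairFun G x y hα0.le (by linarith),
    pointPairFun_le_mul_tMetric G x y hα0 (by linarith)⟩

/-- For every domain `G ⊊ ℝⁿ`, every `0 < α < 2`, and all `x, y ∈ G`:
`t_G(x,y) ≤ p^α_G(x,y) ≤ (4/√(α(4−α)))·t_G(x,y)`, where
`t_G(x,y) = |x−y| / (|x−y| + d_G(x) + d_G(y))` is the t-metric. -/
theorem stmt_12 (n : ℕ) (hn : 1 ≤ n) (G : Set (EuclideanSpace ℝ (Fin n)))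
    (hGopen : IsOpen G) (hGconn : IsConnected G) (hGproper : G ≠ Set.univ)
    (α : ℝ) (hα0 : 0 < α) (hα2 : α < 2)
    (x y : EuclideanSpace ℝ (Fin n)) (hx : x ∈ G) (hy : y ∈ G) :
    dist x y / (dist x y + Metric.infDist x (frontier G) + Metric.infDist y (frontier G)) ≤
        dist x y /
          Real.sqrt (dist x y ^ 2 +
            α * Metric.infDist x (frontier G) * Metric.infDist y (frontier G)) ∧
      dist x y /
          Real.sqrt (dist x y ^ 2 +
            α * Metric.infDist x (frontier G) * Metric.infDist y (frontier G)) ≤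
        4 / Real.sqrt (α * (4 - α)) *
          (dist x y /
            (dist x y + Metric.infDist x (frontier G) + Metric.infDist y (frontier G))) :=
  stmt_12_general n G α hα0 hα2 x y
end

section
/- For every domain G ⊊ ℝⁿ, every α ≥ 2, and all points x, y ∈ G, the two-sided inequality min{1, 2/√α}·t_G(x,y) ≤ p^α_G(x,y) ≤ 2·t_G(x,y) holds. -/
/-!
With `d = |x - y|` and `a, b` the distances of `x, y` to the boundary, both bounds compare
`d² + α a b` with `(d + a + b)²`. The upper bound is `(d + a + b)² ≤ 4 (d² + 2 a b)`, which
reduces to `(a - b)² ≤ d²`, the triangle inequality for the distance to a set. For the lower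
bound, `m = min 1 (2 / √α)` satisfies `m² ≤ 1` and `m² α ≤ 4`, so
`m² (d² + α a b) ≤ d² + 4 a b ≤ (d + a + b)²` by AM-GM.
-/

open Real Metric

namespace PointPair

variable {X : Type*} [PseudoMetricSpace X]

/-- The point pair function `p^α`, with distances measured to the set `s` (for a domain `G`,
`s = ∂G`). -/
noncomputable def pointPairFunction (α : ℝ) (s : Set X) (x y : X) : ℝ :=
  dist x y / √(dist x y ^ 2 + α * infDist x s * infDist y s)

noncomputable def tMetric (s : Set X) (x y : X) : ℝ :=
  dist x y / (dist x y + infDist x s + infDist y s)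

theorem abs_infDist_sub_infDist_le (s : Set X) (x y : X) :
    |infDist x s - infDist y s| ≤ dist x y := by
  simpa [← Real.dist_eq] using (lipschitz_infDist_pt s).dist_le_mul x y

theorem sq_add_add_le_four_mul {a b d α : ℝ} (ha : 0 ≤ a) (hb : 0 ≤ b) (hab : |a - b| ≤ d)
    (hα : 2 ≤ α) : (d + a + b) ^ 2 ≤ 4 * (d ^ 2 + α * a * b) := by
  have hd : (a - b) ^ 2 ≤ d ^ 2 := by
    simpa only [sq_abs] using pow_le_pow_left₀ (abs_nonneg _) hab 2
  nlinarith [sq_nonneg (d - a - b), mul_le_mul_of_nonneg_right hα (mul_nonneg ha hb)]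

theorem sq_min_one_two_div_sqrt_le {α : ℝ} (hα : 0 < α) :
    min 1 (2 / √α) ^ 2 ≤ 1 ∧ min 1 (2 / √α) ^ 2 * α ≤ 4 := by
  have hm : 0 ≤ min 1 (2 / √α) := by positivity
  refine ⟨pow_le_one₀ hm (min_le_left _ _), ?_⟩
  have hmα : min 1 (2 / √α) * √α ≤ 2 :=
    (le_div_iff₀ (sqrt_pos.2 hα)).1 (min_le_right _ _)
  calc min 1 (2 / √α) ^ 2 * α = (min 1 (2 / √α) * √α) ^ 2 := by
        rw [mul_pow, sq_sqrt hα.le]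
    _ ≤ 2 ^ 2 := pow_le_pow_left₀ (by positivity) hmα 2
    _ = 4 := by norm_num

theorem pointPairFunction_le_two_mul_tMetric {α : ℝ} (hα : 2 ≤ α) (s : Set X) (x y : X) :
    pointPairFunction α s x y ≤ 2 * tMetric s x y := by
  unfold pointPairFunction tMetric
  set a := infDist x s
  set b := infDist y s
  set d := dist x y
  obtain hd | hd := (show 0 ≤ d from dist_nonneg).eq_or_lt
  · simp [← hd]
  have ha : 0 ≤ a := infDist_nonneg
  have hb : 0 ≤ b := infDist_nonneg
  have key : d + a + b ≤ 2 * √(d ^ 2 + α * a * b) := by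
    rw [← sqrt_sq zero_le_two, ← sqrt_mul (sq_nonneg 2), le_sqrt (by positivity) (by positivity)]
    linarith [sq_add_add_le_four_mul ha hb (abs_infDist_sub_infDist_le s x y) hα]
  rw [mul_div_assoc', div_le_div_iff₀ (by positivity) (by positivity)]
  linarith [mul_le_mul_of_nonneg_left key hd.le]

theorem min_mul_tMetric_le_pointPairFunction {α : ℝ} (hα : 0 < α) (s : Set X) (x y : X) :
    min 1 (2 / √α) * tMetric s x y ≤ pointPairFunction α s x y := by
  unfold pointPairFunction tMetric
  set a := infDist x s
  set b := infDist y s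
  set m := min 1 (2 / √α)
  set d := dist x y
  obtain hd | hd := (show 0 ≤ d from dist_nonneg).eq_or_lt
  · simp [← hd]
  have ha : 0 ≤ a := infDist_nonneg
  have hb : 0 ≤ b := infDist_nonneg
  have hm : 0 ≤ m := by positivity
  obtain ⟨hm1, hmα⟩ := sq_min_one_two_div_sqrt_le hα
  have key : m * √(d ^ 2 + α * a * b) ≤ d + a + b := by
    rw [← sqrt_sq hm, ← sqrt_mul (sq_nonneg m), sqrt_le_left (by positivity)]
    calc m ^ 2 * (d ^ 2 + α * a * b)
        = m ^ 2 * d ^ 2 + m ^ 2 * α * (a * b) := by ring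
      _ ≤ d ^ 2 + 4 * (a * b) := by
          linarith [mul_le_mul_of_nonneg_right hm1 (sq_nonneg d),
            mul_le_mul_of_nonneg_right hmα (mul_nonneg ha hb)]
      _ ≤ (d + a + b) ^ 2 := by nlinarith [sq_nonneg (a - b)]
  rw [mul_div_assoc', div_le_div_iff₀ (by positivity) (by positivity)]
  linarith [mul_le_mul_of_nonneg_left key hd.le]

end PointPair

open PointPair in
theorem stmt_13_general (n : ℕ) (G : Set (EuclideanSpace ℝ (Fin n)))
    (α : ℝ) (hα : 2 ≤ α)
    (x y : EuclideanSpace ℝ (Fin n)) :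
    min 1 (2 / Real.sqrt α) *
          (dist x y /
            (dist x y + Metric.infDist x (frontier G) + Metric.infDist y (frontier G))) ≤
        dist x y /
          Real.sqrt (dist x y ^ 2 +
            α * Metric.infDist x (frontier G) * Metric.infDist y (frontier G)) ∧
      dist x y /
          Real.sqrt (dist x y ^ 2 +
            α * Metric.infDist x (frontier G) * Metric.infDist y (frontier G)) ≤
        2 *
          (dist x y /
            (dist x y + Metric.infDist x (frontier G) + Metric.infDist y (frontier G))) :=
  ⟨min_mul_tMetric_le_pointPairFunction (by linarith) (frontier G) x y,
    pointPairFunction_le_two_mul_tMetric hα (frontier G) x y⟩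

/-- For every domain `G ⊊ ℝⁿ`, every `α ≥ 2`, and all `x, y ∈ G`:
`min{1, 2/√α}·t_G(x,y) ≤ p^α_G(x,y) ≤ 2·t_G(x,y)`. -/
theorem stmt_13 (n : ℕ) (hn : 1 ≤ n) (G : Set (EuclideanSpace ℝ (Fin n)))
    (hGopen : IsOpen G) (hGconn : IsConnected G) (hGproper : G ≠ Set.univ)
    (α : ℝ) (hα : 2 ≤ α)
    (x y : EuclideanSpace ℝ (Fin n)) (hx : x ∈ G) (hy : y ∈ G) :
    min 1 (2 / Real.sqrt α) *
          (dist x y /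
            (dist x y + Metric.infDist x (frontier G) + Metric.infDist y (frontier G))) ≤
        dist x y /
          Real.sqrt (dist x y ^ 2 +
            α * Metric.infDist x (frontier G) * Metric.infDist y (frontier G)) ∧
      dist x y /
          Real.sqrt (dist x y ^ 2 +
            α * Metric.infDist x (frontier G) * Metric.infDist y (frontier G)) ≤
        2 *
          (dist x y /
            (dist x y + Metric.infDist x (frontier G) + Metric.infDist y (frontier G))) :=
  stmt_13_general n G α hα x y
end

section
/- Let G ⊊ ℝⁿ be a domain and 0 < α < 2. If x ∈ G, z ∈ ∂G with |x−z| = d_G(x), and y = x + (α/2)(z−x), then y ∈ G, d_G(y) = (1 − α/2)·d_G(x), and equality p^α_G(x,y) = (4/√(α(4−α)))·t_G(x,y) holds; in particular, 4/√(α(4−α)) is the best possible constant c such that p^α_G ≤ c·t_G for 0 < α < 2. -/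
/-!
The nearest boundary point `z` of `x` makes the segment `[x, z]` realise the boundary distance
all along: `d_G(y) = |y - z|` for every `y` on it, so `|x - y|`, `d_G(x)` and `d_G(y)` are
proportional to `d_G(x)` with the factors `α/2`, `1` and `1 - α/2`. Both quotients then become
constants, `p = α/√(α(4-α))` and `t = α/4`, whose ratio is `4/√(α(4-α))`; evaluating an
inequality `p ≤ c t` at this pair shows that no smaller `c` works.
-/

open Metric AffineMap

theorem infDist_frontier_pos_of_mem {X : Type*} [PseudoMetricSpace X] {G : Set X}
    (hG : IsOpen G) {x : X} (hx : x ∈ G) (hne : (frontier G).Nonempty) :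
    0 < infDist x (frontier G) :=
  (isClosed_frontier.notMem_iff_infDist_pos hne).mp fun hfr => (hG.frontier_eq ▸ hfr).2 hx

section NearestBoundaryPoint

variable {E : Type*} [NormedAddCommGroup E] [NormedSpace ℝ E]

theorem ball_infDist_frontier_subset {G : Set E} (hG : IsOpen G) {x : E} (hx : x ∈ G) :
    ball x (infDist x (frontier G)) ⊆ G := by
  intro w hw
  have hx' : x ∈ ball x (infDist x (frontier G)) := mem_ball_self (dist_nonneg.trans_lt hw)
  refine (convex_ball x _).isPreconnected.subset_of_closure_inter_subset hG ⟨x, hx', hx⟩ ?_ hw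
  rintro v ⟨hvcl, hv⟩
  rw [closure_eq_self_union_frontier] at hvcl
  exact hvcl.resolve_right (ball_infDist_subset_compl hv)

theorem infDist_lineMap_of_dist_eq_infDist {S : Set E} {x z : E} (hz : z ∈ S)
    (hxz : dist x z = infDist x S) {t : ℝ} (ht0 : 0 ≤ t) (ht1 : t ≤ 1) :
    infDist (lineMap x z t) S = (1 - t) * infDist x S := by
  have hleft : dist x (lineMap x z t) = t * infDist x S := by
    rw [dist_left_lineMap, hxz, Real.norm_of_nonneg ht0]
  apply le_antisymm
  · calc infDist (lineMap x z t) S ≤ dist (lineMap x z t) z := infDist_le_dist_of_mem hz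
      _ = (1 - t) * infDist x S := by
        rw [dist_lineMap_right, hxz, Real.norm_of_nonneg (sub_nonneg.2 ht1)]
  · linarith [infDist_le_infDist_add_dist (x := x) (y := lineMap x z t) (s := S)]

end NearestBoundaryPoint

theorem div_sqrt_sq_add_mul_on_segment (α : ℝ) {d : ℝ} (hd : 0 < d) :
    α / 2 * d / √((α / 2 * d) ^ 2 + α * d * ((1 - α / 2) * d)) = α / √(α * (4 - α)) := by
  have hrad : (α / 2 * d) ^ 2 + α * d * ((1 - α / 2) * d) = (d / 2) ^ 2 * (α * (4 - α)) := by
    ring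
  rw [hrad, Real.sqrt_mul (by positivity), Real.sqrt_sq (by positivity)]
  field_simp

theorem div_add_add_on_segment (α : ℝ) {d : ℝ} (hd : 0 < d) :
    α / 2 * d / (α / 2 * d + d + (1 - α / 2) * d) = α / 4 := by
  field_simp
  ring

theorem stmt_14_general (n : ℕ) (G : Set (EuclideanSpace ℝ (Fin n)))
    (hGopen : IsOpen G)
    (α : ℝ) (hα0 : 0 < α) (hα2 : α < 2)
    (x z : EuclideanSpace ℝ (Fin n)) (hx : x ∈ G) (hz : z ∈ frontier G)
    (hxz : dist x z = Metric.infDist x (frontier G))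
    (y : EuclideanSpace ℝ (Fin n)) (hydef : y = x + (α / 2) • (z - x)) :
    y ∈ G ∧
      Metric.infDist y (frontier G) = (1 - α / 2) * Metric.infDist x (frontier G) ∧
      dist x y /
          Real.sqrt (dist x y ^ 2 +
            α * Metric.infDist x (frontier G) * Metric.infDist y (frontier G)) =
        4 / Real.sqrt (α * (4 - α)) *
          (dist x y /
            (dist x y + Metric.infDist x (frontier G) + Metric.infDist y (frontier G))) ∧
      ∀ c : ℝ,
        (∀ a ∈ G, ∀ b ∈ G,
            dist a b /
                Real.sqrt (dist a b ^ 2 +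
                  α * Metric.infDist a (frontier G) * Metric.infDist b (frontier G)) ≤
              c *
                (dist a b /
                  (dist a b + Metric.infDist a (frontier G) + Metric.infDist b (frontier G)))) →
          4 / Real.sqrt (α * (4 - α)) ≤ c := by
  have hy : y = lineMap x z (α / 2) := by rw [hydef, lineMap_apply_module', add_comm]
  set d := infDist x (frontier G)
  have hd : 0 < d := infDist_frontier_pos_of_mem hGopen hx ⟨z, hz⟩
  have hxy : dist x y = α / 2 * d := by
    rw [hy, dist_left_lineMap, hxz, Real.norm_of_nonneg (by positivity)]
  have hdy : infDist y (frontier G) = (1 - α / 2) * d :=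
    hy ▸ infDist_lineMap_of_dist_eq_infDist hz hxz (by positivity) (by linarith)
  have hyG : y ∈ G :=
    ball_infDist_frontier_subset hGopen hx (by rw [mem_ball, dist_comm, hxy]; nlinarith)
  have hp := div_sqrt_sq_add_mul_on_segment α hd
  have ht := div_add_add_on_segment α hd
  have hs : 0 < √(α * (4 - α)) := Real.sqrt_pos.2 (by nlinarith)
  refine ⟨hyG, hdy, ?_, fun c hc => ?_⟩
  · rw [hxy, hdy, hp, ht]
    field_simp
  · have h := hc x hx y hyG
    rw [hxy, hdy, hp, ht] at h
    calc 4 / √(α * (4 - α)) = α / √(α * (4 - α)) / (α / 4) := by field_simp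
      _ ≤ c := by rwa [div_le_iff₀ (by positivity)]

/-- Let `G ⊊ ℝⁿ` be a domain and `0 < α < 2`. If `x ∈ G`, `z ∈ ∂G` with `|x−z| = d_G(x)`,
and `y = x + (α/2)(z−x)`, then `y ∈ G`, `d_G(y) = (1 − α/2)·d_G(x)`, and
`p^α_G(x,y) = (4/√(α(4−α)))·t_G(x,y)`; in particular, `4/√(α(4−α))` is the best possible
constant `c` with `p^α_G ≤ c·t_G` for `0 < α < 2`. -/
theorem stmt_14 (n : ℕ) (hn : 1 ≤ n) (G : Set (EuclideanSpace ℝ (Fin n)))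
    (hGopen : IsOpen G) (hGconn : IsConnected G) (hGproper : G ≠ Set.univ)
    (α : ℝ) (hα0 : 0 < α) (hα2 : α < 2)
    (x z : EuclideanSpace ℝ (Fin n)) (hx : x ∈ G) (hz : z ∈ frontier G)
    (hxz : dist x z = Metric.infDist x (frontier G))
    (y : EuclideanSpace ℝ (Fin n)) (hydef : y = x + (α / 2) • (z - x)) :
    y ∈ G ∧
      Metric.infDist y (frontier G) = (1 - α / 2) * Metric.infDist x (frontier G) ∧
      dist x y /
          Real.sqrt (dist x y ^ 2 +
            α * Metric.infDist x (frontier G) * Metric.infDist y (frontier G)) =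
        4 / Real.sqrt (α * (4 - α)) *
          (dist x y /
            (dist x y + Metric.infDist x (frontier G) + Metric.infDist y (frontier G))) ∧
      ∀ c : ℝ,
        (∀ a ∈ G, ∀ b ∈ G,
            dist a b /
                Real.sqrt (dist a b ^ 2 +
                  α * Metric.infDist a (frontier G) * Metric.infDist b (frontier G)) ≤
              c *
                (dist a b /
                  (dist a b + Metric.infDist a (frontier G) + Metric.infDist b (frontier G)))) →
          4 / Real.sqrt (α * (4 - α)) ≤ c :=
  stmt_14_general n G hGopen α hα0 hα2 x z hx hz hxz y hydef
end

section
/- For all points x, y in the open unit ball 𝔹ⁿ of ℝⁿ and every α > 0, the two-sided inequality min{1, 1/√α}·tanh(ρ_{𝔹ⁿ}(x,y)/2) ≤ p^α_{𝔹ⁿ}(x,y) ≤ max{1, 2/√α}·tanh(ρ_{𝔹ⁿ}(x,y)/2) holds; equivalently, min{1, 1/√α}·|x−y|/√(|x−y|² + (1−|x|²)(1−|y|²)) ≤ |x−y|/√(|x−y|² + α(1−|x|)(1−|y|)) ≤ max{1, 2/√α}·|x−y|/√(|x−y|² + (1−|x|²)(1−|y|²)). -/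
/-!
Write `P = (1 - ‖x‖)(1 - ‖y‖)` and `Q = (1 - ‖x‖²)(1 - ‖y‖²) = P (1 + ‖x‖)(1 + ‖y‖)`, so that
`P ≤ Q ≤ 4P`. Both quantities have the shape `d / √(d² + A)`, and `c · d / √U ≤ d / √V` as soon
as `c² V ≤ U`; the constants `min{1, 1/√α}` and `max{1, 2/√α}` are exactly what makes
`c² (d² + αP) ≤ d² + P` and `d² + 4P ≤ m² (d² + αP)` hold.
-/

open Real

lemma mul_div_sqrt_le_div_sqrt {c d U V : ℝ} (hc : 0 ≤ c) (hd : 0 ≤ d) (hV : 0 < V)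
    (h : c ^ 2 * V ≤ U) : c * (d / √U) ≤ d / √V := by
  obtain rfl | hc := hc.eq_or_lt
  · rw [zero_mul]
    positivity
  have hcV : c * √V ≤ √U := by
    simpa [sqrt_mul', sqrt_sq hc.le, hV.le] using sqrt_le_sqrt h
  have hU : 0 < √U := lt_of_lt_of_le (by positivity) hcV
  rw [mul_div_assoc', div_le_div_iff₀ hU (sqrt_pos.2 hV)]
  calc c * d * √V = d * (c * √V) := by ring
    _ ≤ d * √U := mul_le_mul_of_nonneg_left hcV hd

lemma div_sqrt_le_mul_div_sqrt {m d U V : ℝ} (hm : 0 < m) (hd : 0 ≤ d) (hU : 0 < U)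
    (h : U ≤ m ^ 2 * V) : d / √V ≤ m * (d / √U) := by
  have hinv : m⁻¹ ^ 2 * U ≤ V := by
    rwa [inv_pow, inv_mul_le_iff₀ (by positivity)]
  rw [← inv_mul_le_iff₀ hm]
  exact mul_div_sqrt_le_div_sqrt (inv_nonneg.2 hm.le) hd hU hinv

section UnitInterval

variable {a b : ℝ}

lemma one_sub_mul_one_sub_le_one_sub_sq_mul (ha₀ : 0 ≤ a) (ha₁ : a ≤ 1) (hb₀ : 0 ≤ b)
    (hb₁ : b ≤ 1) : (1 - a) * (1 - b) ≤ (1 - a ^ 2) * (1 - b ^ 2) := by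
  have hP : 0 ≤ (1 - a) * (1 - b) := mul_nonneg (by linarith) (by linarith)
  nlinarith [mul_nonneg hP (by nlinarith [mul_nonneg ha₀ hb₀] : 0 ≤ a + b + a * b)]

lemma one_sub_sq_mul_le_four_mul (ha₀ : 0 ≤ a) (ha₁ : a ≤ 1) (hb₁ : b ≤ 1) :
    (1 - a ^ 2) * (1 - b ^ 2) ≤ 4 * ((1 - a) * (1 - b)) := by
  have hP : 0 ≤ (1 - a) * (1 - b) := mul_nonneg (by linarith) (by linarith)
  nlinarith [mul_nonneg hP (by nlinarith [mul_nonneg ha₀ (sub_nonneg.2 hb₁)] : 0 ≤ 3 - a - b - a * b)]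

end UnitInterval

section Constants

variable {α : ℝ}

lemma min_one_one_div_sqrt_sq_mul_le_one (hα : 0 < α) : min 1 (1 / √α) ^ 2 * α ≤ 1 := by
  calc min 1 (1 / √α) ^ 2 * α ≤ (1 / √α) ^ 2 * α := by gcongr; exact min_le_right _ _
    _ = 1 := by rw [div_pow, sq_sqrt hα.le]; field_simp

lemma four_le_max_one_two_div_sqrt_sq_mul (hα : 0 < α) : 4 ≤ max 1 (2 / √α) ^ 2 * α := by
  calc (4 : ℝ) = (2 / √α) ^ 2 * α := by rw [div_pow, sq_sqrt hα.le]; field_simp; norm_num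
    _ ≤ max 1 (2 / √α) ^ 2 * α := by gcongr; exact le_max_right _ _

end Constants

theorem stmt_16_general (n : ℕ) (α : ℝ) (hα : 0 < α)
    (x y : EuclideanSpace ℝ (Fin n)) (hx : ‖x‖ < 1) (hy : ‖y‖ < 1) :
    min 1 (1 / Real.sqrt α) *
          (dist x y / Real.sqrt (dist x y ^ 2 + (1 - ‖x‖ ^ 2) * (1 - ‖y‖ ^ 2))) ≤
        dist x y / Real.sqrt (dist x y ^ 2 + α * (1 - ‖x‖) * (1 - ‖y‖)) ∧
      dist x y / Real.sqrt (dist x y ^ 2 + α * (1 - ‖x‖) * (1 - ‖y‖)) ≤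
        max 1 (2 / Real.sqrt α) *
          (dist x y / Real.sqrt (dist x y ^ 2 + (1 - ‖x‖ ^ 2) * (1 - ‖y‖ ^ 2))) := by
  have hP : 0 < (1 - ‖x‖) * (1 - ‖y‖) := mul_pos (by linarith) (by linarith)
  have hPQ := one_sub_mul_one_sub_le_one_sub_sq_mul (norm_nonneg x) hx.le (norm_nonneg y) hy.le
  have hQP := one_sub_sq_mul_le_four_mul (norm_nonneg x) hx.le hy.le
  have hd := sq_nonneg (dist x y)
  have hV : 0 < dist x y ^ 2 + α * (1 - ‖x‖) * (1 - ‖y‖) := by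
    rw [mul_assoc]; positivity
  constructor
  · set c := min 1 (1 / √α)
    have hc₁ : c ^ 2 ≤ 1 := pow_le_one₀ (by positivity) (min_le_left _ _)
    have hcα := min_one_one_div_sqrt_sq_mul_le_one hα
    refine mul_div_sqrt_le_div_sqrt (by positivity) dist_nonneg hV ?_
    nlinarith [mul_le_mul_of_nonneg_right hcα hP.le]
  · set m := max 1 (2 / √α)
    have hm₁ : 1 ≤ m ^ 2 := one_le_pow₀ (le_max_left _ _)
    have hmα := four_le_max_one_two_div_sqrt_sq_mul hα
    refine div_sqrt_le_mul_div_sqrt (by positivity) dist_nonneg (by linarith) ?_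
    nlinarith [mul_le_mul_of_nonneg_right hmα hP.le]

/-- For all `x, y` in the open unit ball `𝔹ⁿ` and `α > 0`:
`min{1, 1/√α}·tanh(ρ_𝔹(x,y)/2) ≤ p^α_𝔹(x,y) ≤ max{1, 2/√α}·tanh(ρ_𝔹(x,y)/2)`, where
`tanh(ρ_𝔹(x,y)/2) = |x−y|/√(|x−y|² + (1−|x|²)(1−|y|²))` and
`p^α_𝔹(x,y) = |x−y|/√(|x−y|² + α(1−|x|)(1−|y|))`. -/
theorem stmt_16 (n : ℕ) (hn : 1 ≤ n) (α : ℝ) (hα : 0 < α)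
    (x y : EuclideanSpace ℝ (Fin n)) (hx : ‖x‖ < 1) (hy : ‖y‖ < 1) :
    min 1 (1 / Real.sqrt α) *
          (dist x y / Real.sqrt (dist x y ^ 2 + (1 - ‖x‖ ^ 2) * (1 - ‖y‖ ^ 2))) ≤
        dist x y / Real.sqrt (dist x y ^ 2 + α * (1 - ‖x‖) * (1 - ‖y‖)) ∧
      dist x y / Real.sqrt (dist x y ^ 2 + α * (1 - ‖x‖) * (1 - ‖y‖)) ≤
        max 1 (2 / Real.sqrt α) *
          (dist x y / Real.sqrt (dist x y ^ 2 + (1 - ‖x‖ ^ 2) * (1 - ‖y‖ ^ 2))) :=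
  stmt_16_general n α hα x y hx hy
end

section
/- In the upper half-space G = ℍⁿ with α > 0, the points x = (0,...,0,1) and y = (α/2, 0,...,0, 1) satisfy p^α_{ℍⁿ}(x,y) = √((α+4)/α)·j*_{ℍⁿ}(x,y); hence √((α+4)/α) is the best possible constant c in terms of α such that p^α_{ℍⁿ}(x,y) ≤ c·j*_{ℍⁿ}(x,y) for all x, y ∈ ℍⁿ. -/
/-
At `x = eₙ` and `y = eₙ + (α/2)e₁` both points have height `1` and `|x - y| = α/2`, so
`p^α = (α/2)/√(α²/4 + α) = 1/√K` and `j* = (α/2)/(α/2 + 2) = 1/K` with `K = (α + 4)/α`;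
thus `p^α = √K · j*` there, and any admissible constant `c` must satisfy `√K ≤ c`.
-/

open Real

namespace UpperHalfSpace

variable {n : ℕ}

noncomputable def pointPair (α : ℝ) (a b : EuclideanSpace ℝ (Fin (n + 1))) : ℝ :=
  dist a b / √(dist a b ^ 2 + α * a (Fin.last n) * b (Fin.last n))

noncomputable def jStar (a b : EuclideanSpace ℝ (Fin (n + 1))) : ℝ :=
  dist a b / (dist a b + 2 * min (a (Fin.last n)) (b (Fin.last n)))

variable {α : ℝ} {a b : EuclideanSpace ℝ (Fin (n + 1))}

theorem jStar_pos (hab : 0 < dist a b) (ha : 0 < a (Fin.last n)) (hb : 0 < b (Fin.last n)) :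
    0 < jStar a b := by
  unfold jStar
  positivity

theorem pointPair_eq_sqrt_mul_jStar (hα : 0 < α) (hab : dist a b = α / 2)
    (ha : a (Fin.last n) = 1) (hb : b (Fin.last n) = 1) :
    pointPair α a b = √((α + 4) / α) * jStar a b := by
  unfold pointPair jStar
  rw [hab, ha, hb, min_self]
  set K := (α + 4) / α with hK
  have hKpos : 0 < K := by positivity
  have hsq : (α / 2) ^ 2 + α * 1 * 1 = (α / 2) ^ 2 * K := by
    rw [hK]; field_simp; ring
  have hj : α / 2 / (α / 2 + 2 * 1) = K⁻¹ := by
    rw [hK]; field_simp; ring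
  rw [hsq, sqrt_mul (sq_nonneg _), sqrt_sq (by positivity), hj]
  field_simp
  exact (sq_sqrt hKpos.le).symm

end UpperHalfSpace

open UpperHalfSpace

/-- In the upper half-space `ℍⁿ` (last coordinate positive, `d(x) = xₙ`), with `α > 0`,
the points `x = (0,…,0,1)` and `y = (α/2, 0,…,0, 1)` satisfy
`p^α_ℍ(x,y) = √((α+4)/α)·j*_ℍ(x,y)`; hence `√((α+4)/α)` is the best possible constant `c`
such that `p^α_ℍ(a,b) ≤ c·j*_ℍ(a,b)` for all `a, b ∈ ℍⁿ`. -/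
theorem stmt_18 (n : ℕ) (α : ℝ) (hα : 0 < α)
    (x y : EuclideanSpace ℝ (Fin (n + 2)))
    (hxdef : x = EuclideanSpace.single (Fin.last (n + 1)) (1 : ℝ))
    (hydef : y = EuclideanSpace.single (0 : Fin (n + 2)) (α / 2) +
      EuclideanSpace.single (Fin.last (n + 1)) (1 : ℝ)) :
    dist x y /
        Real.sqrt (dist x y ^ 2 + α * x (Fin.last (n + 1)) * y (Fin.last (n + 1))) =
      Real.sqrt ((α + 4) / α) *
        (dist x y /
          (dist x y + 2 * min (x (Fin.last (n + 1))) (y (Fin.last (n + 1))))) ∧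
      ∀ c : ℝ,
        (∀ a b : EuclideanSpace ℝ (Fin (n + 2)),
            0 < a (Fin.last (n + 1)) → 0 < b (Fin.last (n + 1)) →
              dist a b /
                  Real.sqrt (dist a b ^ 2 +
                    α * a (Fin.last (n + 1)) * b (Fin.last (n + 1))) ≤
                c *
                  (dist a b /
                    (dist a b +
                      2 * min (a (Fin.last (n + 1))) (b (Fin.last (n + 1)))))) →
          Real.sqrt ((α + 4) / α) ≤ c := by
  have hx : x (Fin.last (n + 1)) = 1 := by simp [hxdef]
  have hy : y (Fin.last (n + 1)) = 1 := by simp [hydef, Fin.last_pos.ne']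
  have hxy : dist x y = α / 2 := by
    rw [hydef, ← hxdef, add_comm _ x, dist_self_add_right, PiLp.norm_single,
      norm_of_nonneg (by positivity)]
  have hsharp := pointPair_eq_sqrt_mul_jStar hα hxy hx hy
  refine ⟨hsharp, fun c hc => le_of_mul_le_mul_right ?_ (jStar_pos
    (hxy ▸ by positivity) (hx ▸ one_pos) (hy ▸ one_pos))⟩
  calc √((α + 4) / α) * jStar x y = pointPair α x y := hsharp.symm
    _ ≤ c * jStar x y := hc x y (hx ▸ one_pos) (hy ▸ one_pos)
end
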